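/- Let b ≥ 2 be a natural number, d ≥ 3, U_1 ~ Uniform(0,1), U_i = (b^{i-2} U_1 + 1/b) mod 1 for i = 2,...,d-1, and U_d = 1 - (b^{d-2} U_1) mod 1. Then the sum U_1 + ... + U_d is almost surely constant if and only if b = 2. -/

import Mathlib

open MeasureTheory Set

private lemma fract_add_half (x : ℝ) :
    Int.fract (x + 1/2) = 1/2 - Int.fract x + Int.fract (2*x) := by
  have hfl := Int.floor_add_fract x
  have h0 := Int.fract_nonneg x
  have h1 := Int.fract_lt_one x
  have e1 : Int.fract (x + 1/2) = Int.fract (Int.fract x + 1/2) := by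
    have h : x + 1/2 = (Int.fract x + 1/2) + (⌊x⌋ : ℤ) := by push_cast; linarith
    rw [h, Int.fract_add_intCast]
  have e2 : Int.fract (2*x) = Int.fract (2 * Int.fract x) := by
    have h : 2*x = (2 * Int.fract x) + ((2*⌊x⌋ : ℤ) : ℝ) := by push_cast; linarith
    rw [h, Int.fract_add_intCast]
  rcases lt_or_ge (Int.fract x) (1/2) with h | h
  · have b1 : Int.fract (Int.fract x + 1/2) = Int.fract x + 1/2 :=
      Int.fract_eq_self.2 ⟨by linarith, by linarith⟩
    have b2 : Int.fract (2 * Int.fract x) = 2 * Int.fract x :=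
      Int.fract_eq_self.2 ⟨by linarith, by linarith⟩
    rw [e1, e2, b1, b2]; ring
  · have a1 : Int.fract (Int.fract x + 1/2) = Int.fract x - 1/2 := by
      calc Int.fract (Int.fract x + 1/2)
          = Int.fract ((Int.fract x - 1/2) + ((1:ℤ) : ℝ)) := by congr 1; push_cast; ring
        _ = Int.fract (Int.fract x - 1/2) := Int.fract_add_intCast _ _
        _ = Int.fract x - 1/2 := Int.fract_eq_self.2 ⟨by linarith, by linarith⟩
    have a2 : Int.fract (2 * Int.fract x) = 2 * Int.fract x - 1 := by
      calc Int.fract (2 * Int.fract x)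
          = Int.fract ((2 * Int.fract x - 1) + ((1:ℤ) : ℝ)) := by congr 1; push_cast; ring
        _ = Int.fract (2 * Int.fract x - 1) := Int.fract_add_intCast _ _
        _ = 2 * Int.fract x - 1 := Int.fract_eq_self.2 ⟨by linarith, by linarith⟩
    rw [e1, e2, a1, a2]; ring

/-- For the base-`b` Arvidsen–Johnson construction (`b ≥ 2`, `d ≥ 3`):
`U_1 = V`, `U_i = (b^{i-2} V + 1/b) mod 1` for `2 ≤ i ≤ d-1`,
`U_d = 1 - (b^{d-2} V) mod 1`, the sum `U_1 + ⋯ + U_d` is almost surely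
constant if and only if `b = 2`. -/
theorem baseb_arvidsen_johnson_const_sum_iff {Ω : Type*} [MeasurableSpace Ω]
    (μ : Measure Ω) [IsProbabilityMeasure μ]
    (b d : ℕ) (hb : 2 ≤ b) (hd : 3 ≤ d)
    (V : Ω → ℝ) (hV : Measurable V)
    (hunif : μ.map V = volume.restrict (Icc (0:ℝ) 1))
    (U : ℕ → Ω → ℝ)
    (hU1 : U 1 = fun ω => V ω)
    (hUmid : ∀ i, 2 ≤ i → i ≤ d - 1 →
      U i = fun ω => Int.fract ((b:ℝ) ^ (i - 2) * V ω + 1 / (b:ℝ)))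
    (hUd : U d = fun ω => 1 - Int.fract ((b:ℝ) ^ (d - 2) * V ω)) :
    (∃ c : ℝ, ∀ᵐ ω ∂μ, ∑ i ∈ Finset.Icc 1 d, U i ω = c) ↔ b = 2 := by
  -- the deterministic sum function
  set S : ℝ → ℝ := fun v => v +
      (∑ i ∈ Finset.Icc 2 (d-1), Int.fract ((b:ℝ)^(i-2) * v + 1/(b:ℝ))) +
      (1 - Int.fract ((b:ℝ)^(d-2) * v)) with hS
  have hIcc : Finset.Icc 2 (d-1) = Finset.Ico 2 d := by
    ext x; simp only [Finset.mem_Icc, Finset.mem_Ico]; omega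
  -- rewrite the random sum
  have hsum : ∀ ω, ∑ i ∈ Finset.Icc 1 d, U i ω = S (V ω) := by
    intro ω
    have hset : Finset.Icc 1 d = insert 1 (insert d (Finset.Icc 2 (d-1))) := by
      ext x; simp only [Finset.mem_Icc, Finset.mem_insert]; omega
    have h1 : (1:ℕ) ∉ insert d (Finset.Icc 2 (d-1)) := by
      simp only [Finset.mem_insert, Finset.mem_Icc]; omega
    have h2 : d ∉ Finset.Icc 2 (d-1) := by
      simp only [Finset.mem_Icc]; omega
    have hmid : ∑ i ∈ Finset.Icc 2 (d-1), U i ω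
        = ∑ i ∈ Finset.Icc 2 (d-1), Int.fract ((b:ℝ)^(i-2) * V ω + 1/(b:ℝ)) := by
      refine Finset.sum_congr rfl fun i hi => ?_
      simp only [Finset.mem_Icc] at hi
      rw [hUmid i hi.1 hi.2]
    rw [hset, Finset.sum_insert h1, Finset.sum_insert h2, hmid, hU1, hUd, hS]
    ring
  -- measurability of S
  have hSm : Measurable S := by
    have hfr : ∀ (a c : ℝ), Measurable fun v : ℝ => Int.fract (a*v + c) := fun a c =>
      ((measurable_id.const_mul a).add_const c).fract
    have h2 : Measurable fun v : ℝ =>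
        ∑ i ∈ Finset.Icc 2 (d-1), Int.fract ((b:ℝ)^(i-2) * v + 1/(b:ℝ)) :=
      Finset.measurable_sum _ fun i _ => hfr _ _
    have h3 : Measurable fun v : ℝ => 1 - Int.fract ((b:ℝ)^(d-2) * v) :=
      measurable_const.sub (measurable_id.const_mul _).fract
    exact (measurable_id.add h2).add h3
  -- transfer a.e. statements along V
  have key : ∀ c : ℝ, (∀ᵐ ω ∂μ, ∑ i ∈ Finset.Icc 1 d, U i ω = c) ↔
      (∀ᵐ v ∂(volume.restrict (Icc (0:ℝ) 1)), S v = c) := by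
    intro c
    have hms : MeasurableSet {v : ℝ | S v = c} :=
      measurableSet_eq_fun hSm measurable_const
    calc (∀ᵐ ω ∂μ, ∑ i ∈ Finset.Icc 1 d, U i ω = c)
        ↔ (∀ᵐ ω ∂μ, S (V ω) = c) :=
          Filter.eventually_congr (Filter.Eventually.of_forall fun ω => by rw [hsum ω])
      _ ↔ (∀ᵐ v ∂(μ.map V), S v = c) := (ae_map_iff hV.aemeasurable hms).symm
      _ ↔ _ := by rw [hunif]
  constructor
  · -- constancy implies b = 2
    rintro ⟨c, hc⟩
    by_contra hb2
    have hb3 : 3 ≤ b := by omega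
    have hb3R : (3:ℝ) ≤ (b:ℝ) := by exact_mod_cast hb3
    have hbpos : (0:ℝ) < (b:ℝ) := by linarith
    have hpow3 : (3:ℝ) ≤ (b:ℝ)^(d-2) := by
      calc (3:ℝ) ≤ (b:ℝ) := hb3R
        _ ≤ (b:ℝ)^(d-2) := le_self_pow₀ (by linarith) (by omega)
    have hppos : (0:ℝ) < (b:ℝ)^(d-2) := by linarith
    set ε : ℝ := 1/(2*(b:ℝ)^(d-2)) with hε
    have hεpos : 0 < ε := by positivity
    have hε1 : ε ≤ 1 := by
      rw [hε, div_le_one (by linarith)]; linarith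
    set G : ℝ := ∑ k ∈ Finset.range (d-2), (b:ℝ)^k with hG
    set m : ℝ := 1 + G - (b:ℝ)^(d-2) with hm_def
    set q : ℝ := ((d:ℝ)-2) * (1/(b:ℝ)) + 1 with hq_def
    -- S is affine on (0, ε)
    have haff : ∀ v ∈ Ioo (0:ℝ) ε, S v = m * v + q := by
      intro v hv
      obtain ⟨hv0, hvε⟩ := hv
      simp only [hS]
      rw [hIcc, Finset.sum_Ico_eq_sum_range]
      simp only [Nat.add_sub_cancel_left]
      have hbig : ∀ k ∈ Finset.range (d-2),
          Int.fract ((b:ℝ)^k * v + 1/(b:ℝ)) = (b:ℝ)^k * v + 1/(b:ℝ) := by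
        intro k hk
        simp only [Finset.mem_range] at hk
        have hk1 : (b:ℝ)^(k+1) ≤ (b:ℝ)^(d-2) := pow_le_pow_right₀ (by linarith) (by omega)
        have hbk : (0:ℝ) < (b:ℝ)^k := by positivity
        refine Int.fract_eq_self.2 ⟨by positivity, ?_⟩
        have h2 : (b:ℝ)^k * v < (b:ℝ)^k * ε := mul_lt_mul_of_pos_left hvε hbk
        have h3 : (b:ℝ)^k * ε ≤ 1/(2*(b:ℝ)) := by
          rw [hε, mul_one_div, div_le_div_iff₀ (by positivity) (by positivity)]
          have hps : (b:ℝ)^k * (b:ℝ) = (b:ℝ)^(k+1) := (pow_succ _ _).symm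
          nlinarith [hk1]
        have h1b : 1/(b:ℝ) ≤ 1/3 := by
          rw [div_le_div_iff₀ hbpos (by norm_num)]; linarith
        have h12b : 1/(2*(b:ℝ)) ≤ 1/6 := by
          rw [div_le_div_iff₀ (by linarith) (by norm_num)]; linarith
        linarith
      rw [Finset.sum_congr rfl hbig]
      have hlast : Int.fract ((b:ℝ)^(d-2) * v) = (b:ℝ)^(d-2) * v := by
        refine Int.fract_eq_self.2 ⟨by positivity, ?_⟩
        have he : (b:ℝ)^(d-2) * ε = 1/2 := by
          rw [hε]; field_simp
        nlinarith [mul_lt_mul_of_pos_left hvε hppos]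
      rw [hlast, Finset.sum_add_distrib, ← Finset.sum_mul, Finset.sum_const,
        Finset.card_range, nsmul_eq_mul]
      have hdc : ((d-2:ℕ):ℝ) = (d:ℝ)-2 := by
        push_cast [Nat.cast_sub (show 2 ≤ d by omega)]; ring
      rw [hdc, hm_def, hq_def, hG]; ring
    -- slope is negative
    have hm : m < 0 := by
      have hg := geom_sum_mul ((b:ℝ)) (d-2)
      rw [← hG] at hg
      nlinarith [hg, hpow3, hb3R]
    -- a.e. constancy on [0,1]
    have hc' : ∀ᵐ v ∂(volume.restrict (Icc (0:ℝ) 1)), S v = c := (key c).1 hc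
    set ν := volume.restrict (Icc (0:ℝ) 1) with hν_def
    have hnull : ν {v : ℝ | ¬ S v = c} = 0 := ae_iff.1 hc'
    set x0 : ℝ := (c - q)/m with hx0_def
    have hsub : {v : ℝ | S v = c} ∩ Ioo 0 ε ⊆ {x0} := by
      rintro v ⟨hv1, hv2⟩
      have h := haff v hv2
      have : v = (c - q)/m := by
        rw [eq_div_iff hm.ne]
        have : S v = c := hv1
        rw [h] at this; linarith
      simp [hx0_def, this]
    have hx0 : ν {x0} = 0 := by
      rw [hν_def, Measure.restrict_apply (measurableSet_singleton _)]
      exact measure_mono_null inter_subset_left (measure_singleton _)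
    have hIoo : ν (Ioo 0 ε) = ENNReal.ofReal ε := by
      rw [hν_def, Measure.restrict_apply measurableSet_Ioo,
        inter_eq_self_of_subset_left
          (fun v hv => Set.mem_Icc.2 ⟨le_of_lt hv.1, le_trans (le_of_lt hv.2) hε1⟩),
        Real.volume_Ioo, sub_zero]
    have hle : ν (Ioo 0 ε) ≤ ν ({v : ℝ | S v = c} ∩ Ioo 0 ε) + ν {v : ℝ | ¬ S v = c} := by
      refine le_trans (measure_mono fun v hv => ?_) (measure_union_le _ _)
      by_cases h : S v = c
      · exact Or.inl ⟨h, hv⟩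
      · exact Or.inr h
    rw [hIoo, hnull, measure_mono_null hsub hx0, add_zero] at hle
    exact (ENNReal.ofReal_pos.2 hεpos).ne' (le_antisymm hle (zero_le))
  · -- b = 2 gives constant sum d/2
    intro hb2
    subst hb2
    refine ⟨(d:ℝ)/2, (key _).2 ?_⟩
    have h1 : ∀ᵐ v ∂(volume.restrict (Icc (0:ℝ) 1)), v ≠ 1 := by
      refine ae_iff.2 ?_
      simp only [not_not, setOf_eq_eq_singleton]
      rw [Measure.restrict_apply (measurableSet_singleton _)]
      exact measure_mono_null inter_subset_left (measure_singleton _)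
    filter_upwards [ae_restrict_mem measurableSet_Icc, h1] with v hv hv1
    have hv0 : 0 ≤ v := hv.1
    have hv1' : v < 1 := lt_of_le_of_ne hv.2 hv1
    simp only [hS]
    have hcast : ((2:ℕ):ℝ) = 2 := by norm_num
    rw [hIcc, Finset.sum_Ico_eq_sum_range]
    simp only [Nat.add_sub_cancel_left, Nat.cast_ofNat]
    have hrw : ∀ k ∈ Finset.range (d-2), Int.fract ((2:ℝ)^k * v + 1/2)
        = 1/2 + (Int.fract ((2:ℝ)^(k+1) * v) - Int.fract ((2:ℝ)^k * v)) := by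
      intro k _
      rw [fract_add_half]
      have h2 : 2 * ((2:ℝ)^k * v) = (2:ℝ)^(k+1) * v := by ring
      rw [h2]; ring
    rw [Finset.sum_congr rfl hrw, Finset.sum_add_distrib,
      Finset.sum_range_sub (fun k => Int.fract ((2:ℝ)^k * v)), Finset.sum_const,
      Finset.card_range, nsmul_eq_mul]
    have hf0 : Int.fract ((2:ℝ)^0 * v) = v := by
      simp only [pow_zero, one_mul]
      exact Int.fract_eq_self.2 ⟨hv0, hv1'⟩
    rw [hf0]
    have hdc : ((d-2:ℕ):ℝ) = (d:ℝ)-2 := by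
      push_cast [Nat.cast_sub (show 2 ≤ d by omega)]; ring
    rw [hdc]; ring
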